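/- Let V be the value process of the standard Dynkin game SDG(L, U, Z) with L = X ∧ Z, U = Y ∨ Z. Then for each t, V_t lies between the maximin and minimax of the general game GDG_t(X,Y,Z): ess inf over σ ∈ T_[t,T] of ess sup over τ ∈ T_[t,T] of E[R(τ,σ)|F_t] ≥ V_t ≥ ess sup over τ of ess inf over σ of E[R(τ,σ)|F_t]. Consequently, if GDG_t(X,Y,Z) has a value, that value equals V_t. -/

import Mathlib

/-! Fix an `ℱ`-stopping time `σ` for the minimizer. The maximizer stops at the first
`s ≥ t` at which stopping is at least as good as continuing in the standard game, namely
`V_s ≤ X_s` before `σ`, or `V_s ≤ Z_s` at `σ`. Up to `τ ∧ σ` the value process is then a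
submartingale, and at `τ ∧ σ` it is dominated by the payoff `R(τ, σ)`; conditional optional
sampling gives `V_t ≤ E[R(τ, σ) | ℱ_t]`, so `V_t` is below the minimax. Negating the game
(`X, Y, Z, V ↦ -Y, -X, -Z, -V`, swapping the players) turns this into the bound by the
maximin. -/

open MeasureTheory Filter Set

/-- Payoff of the general Dynkin game. -/
noncomputable def payoffD {Ω : Type*} (X Y Z : ℕ → Ω → ℝ) (τ σ : Ω → ℕ) (ω : Ω) : ℝ :=
  if τ ω < σ ω then X (τ ω) ω else if σ ω < τ ω then Y (σ ω) ω else Z (σ ω) ω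

/-- `g` is the essential supremum of the family `f` (in the a.e. order). -/
def IsEssSupFam {Ω : Type*} [MeasurableSpace Ω] (μ : Measure Ω) {ι : Sort*}
    (f : ι → Ω → ℝ) (g : Ω → ℝ) : Prop :=
  (∀ i, f i ≤ᵐ[μ] g) ∧ ∀ h : Ω → ℝ, (∀ i, f i ≤ᵐ[μ] h) → g ≤ᵐ[μ] h

/-- `g` is the essential infimum of the family `f` (in the a.e. order). -/
def IsEssInfFam {Ω : Type*} [MeasurableSpace Ω] (μ : Measure Ω) {ι : Sort*}
    (f : ι → Ω → ℝ) (g : Ω → ℝ) : Prop :=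
  (∀ i, g ≤ᵐ[μ] f i) ∧ ∀ h : Ω → ℝ, (∀ i, h ≤ᵐ[μ] f i) → h ≤ᵐ[μ] g

section

variable {Ω : Type*} {m0 : MeasurableSpace Ω} {μ : Measure Ω} {ℱ : Filtration ℕ m0}

abbrev StoppingTimeIcc (ℱ : Filtration ℕ m0) (t T : ℕ) :=
  {σ : Ω → ℕ // IsStoppingTime ℱ (fun ω => (σ ω : WithTop ℕ)) ∧ ∀ ω, σ ω ∈ Icc t T}

lemma le_minimax_of_forall_exists {ι κ : Type*} {f : ι → κ → Ω → ℝ} {S : κ → Ω → ℝ}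
    {m v : Ω → ℝ} (hS : ∀ k, IsEssSupFam μ (fun i => f i k) (S k)) (hm : IsEssInfFam μ S m)
    (hv : ∀ k, ∃ i, v ≤ᵐ[μ] f i k) : v ≤ᵐ[μ] m :=
  hm.2 v fun k => by
    obtain ⟨i, hi⟩ := hv k
    exact hi.trans ((hS k).1 i)

lemma maximin_le_of_forall_exists {ι κ : Type*} {f : ι → κ → Ω → ℝ} {I : ι → Ω → ℝ}
    {m v : Ω → ℝ} (hI : ∀ i, IsEssInfFam μ (f i) (I i)) (hm : IsEssSupFam μ I m)
    (hv : ∀ i, ∃ k, f i k ≤ᵐ[μ] v) : m ≤ᵐ[μ] v :=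
  hm.2 v fun i => by
    obtain ⟨k, hk⟩ := hv i
    exact ((hI i).1 k).trans hk

lemma payoffD_neg_swap (X Y Z : ℕ → Ω → ℝ) (τ σ : Ω → ℕ) :
    payoffD (-Y) (-X) (-Z) σ τ = -payoffD X Y Z τ σ := by
  funext ω
  rcases lt_trichotomy (τ ω) (σ ω) with h | h | h
  · simp [payoffD, h, h.not_gt]
  · simp [payoffD, h]
  · simp [payoffD, h, h.not_gt]

lemma integrable_eval_of_forall_mem {ι E : Type*} [MeasurableSpace ι]
    [MeasurableSingletonClass ι] [NormedAddCommGroup E] {W : ι → Ω → E} {ρ : Ω → ι}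
    (hρ : Measurable ρ) (s : Finset ι) (hρs : ∀ ω, ρ ω ∈ s) (hW : ∀ i ∈ s, Integrable (W i) μ) :
    Integrable (fun ω => W (ρ ω) ω) μ := by
  have hsum : (fun ω => W (ρ ω) ω) = fun ω => ∑ i ∈ s, {ω | ρ ω = i}.indicator (W i) ω := by
    funext ω
    rw [Finset.sum_eq_single_of_mem (f := fun i => {ω | ρ ω = i}.indicator (W i) ω) (ρ ω) (hρs ω)
      fun i _ hi => Set.indicator_of_notMem (s := {ω | ρ ω = i}) (Ne.symm hi) _,
      Set.indicator_of_mem (s := {ω' | ρ ω' = ρ ω}) rfl]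
  rw [hsum]
  exact integrable_finsetSum s fun i hi => (hW i hi).indicator (hρ (measurableSet_singleton i))

lemma integrable_eval_of_le {T : ℕ} {W : ℕ → Ω → ℝ} (hWi : ∀ s ≤ T, Integrable (W s) μ)
    {ρ : Ω → ℕ} (hρ : Measurable ρ) (hρT : ∀ ω, ρ ω ≤ T) :
    Integrable (fun ω => W (ρ ω) ω) μ :=
  integrable_eval_of_forall_mem hρ (Finset.range (T + 1)) (fun ω => by simp [hρT ω])
    fun s hs => hWi s (Nat.lt_succ_iff.1 (Finset.mem_range.1 hs))

lemma integrable_payoffD {T : ℕ} {X Y Z : ℕ → Ω → ℝ} (hXi : ∀ s, Integrable (X s) μ)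
    (hYi : ∀ s, Integrable (Y s) μ) (hZi : ∀ s, Integrable (Z s) μ) {τ σ : Ω → ℕ}
    (hτ : Measurable τ) (hσ : Measurable σ) (hτT : ∀ ω, τ ω ≤ T) (hσT : ∀ ω, σ ω ≤ T) :
    Integrable (payoffD X Y Z τ σ) μ :=
  integrable_eval_of_forall_mem (ρ := fun ω => (τ ω, σ ω))
    (W := fun p ω => if p.1 < p.2 then X p.1 ω else if p.2 < p.1 then Y p.2 ω else Z p.2 ω)
    (hτ.prodMk hσ) (Finset.range (T + 1) ×ˢ Finset.range (T + 1))
    (fun ω => by simp [hτT ω, hσT ω])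
    (fun p _ => by split_ifs <;> simp only [hXi, hYi, hZi])

lemma measurable_of_isStoppingTime {ρ : Ω → ℕ}
    (hρ : IsStoppingTime ℱ (fun ω => (ρ ω : WithTop ℕ))) : Measurable ρ :=
  measurable_to_countable' fun n => ℱ.le n _ (by
    simpa only [ENat.some_eq_natCast, Nat.cast_inj] using hρ.measurableSet_eq n :
      MeasurableSet[ℱ n] {ω | ρ ω = n})

lemma isStoppingTime_min {τ σ : Ω → ℕ} (hτ : IsStoppingTime ℱ (fun ω => (τ ω : WithTop ℕ)))
    (hσ : IsStoppingTime ℱ (fun ω => (σ ω : WithTop ℕ))) :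
    IsStoppingTime ℱ (fun ω => ((min (τ ω) (σ ω) : ℕ) : WithTop ℕ)) := fun n => by
  simpa [min_le_iff, Set.ofPred_or] using (hτ n).union (hσ n)

lemma exists_isStoppingTime_first {T : ℕ} {C : ℕ → Ω → Prop}
    (hC : ∀ n ≤ T, MeasurableSet[ℱ n] {ω | C n ω}) (hCT : ∀ ω, C T ω) :
    ∃ τ : Ω → ℕ, IsStoppingTime ℱ (fun ω => (τ ω : WithTop ℕ)) ∧ (∀ ω, τ ω ≤ T) ∧
      (∀ ω, C (τ ω) ω) ∧ ∀ ω, ∀ s < τ ω, ¬ C s ω := by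
  classical
  have hex : ∀ ω, ∃ s, C s ω := fun ω => ⟨T, hCT ω⟩
  refine ⟨fun ω => Nat.find (hex ω), fun n => ?_, fun ω => Nat.find_min' _ (hCT ω),
    fun ω => Nat.find_spec (hex ω), fun ω s hs => Nat.find_min _ hs⟩
  have hset : {ω | Nat.find (hex ω) ≤ n} = ⋃ m ∈ Iic (min n T), {ω | C m ω} := by
    ext ω
    simp only [Set.mem_ofPred_eq, Set.mem_iUnion, Set.mem_Iic, exists_prop, le_min_iff]
    exact ⟨fun h => ⟨_, ⟨h, Nat.find_min' _ (hCT ω)⟩, Nat.find_spec (hex ω)⟩,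
      fun ⟨m, hm, hCm⟩ => (Nat.find_min' _ hCm).trans hm.1⟩
  have hmeas : MeasurableSet[ℱ n] {ω | Nat.find (hex ω) ≤ n} :=
    hset ▸ MeasurableSet.biUnion (Set.to_countable _) fun m hm =>
      ℱ.mono (le_min_iff.1 hm).1 _ (hC m (le_min_iff.1 hm).2)
  simpa only [ENat.some_eq_natCast, Nat.cast_le] using hmeas

variable [IsFiniteMeasure μ]

lemma condExp_indicator_sub_nonneg {m m' : MeasurableSpace Ω} (hmm' : m ≤ m') (hm' : m' ≤ m0)
    {f g : Ω → ℝ} (hf : StronglyMeasurable[m'] f) (hfi : Integrable f μ) (hgi : Integrable g μ)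
    {A : Set Ω} (hA : MeasurableSet[m'] A) (hfg : ∀ᵐ ω ∂μ, ω ∈ A → f ω ≤ μ[g | m'] ω) :
    0 ≤ᵐ[μ] μ[A.indicator (g - f) | m] := by
  have hinner : μ[A.indicator (g - f) | m'] =ᵐ[μ] A.indicator (μ[g | m'] - f) := by
    refine (condExp_indicator (hgi.sub hfi) hA).trans ?_
    filter_upwards [condExp_sub (m := m') hgi hfi] with ω hω
    rw [condExp_of_stronglyMeasurable hm' hf hfi] at hω
    by_cases hωA : ω ∈ A <;> simp [hωA, hω]
  have hnonneg : 0 ≤ᵐ[μ] μ[A.indicator (g - f) | m'] := by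
    filter_upwards [hinner, hfg] with ω hω hfgω
    by_cases hωA : ω ∈ A
    · simpa [hω, hωA] using hfgω hωA
    · simp [hω, hωA]
  exact (condExp_nonneg hnonneg).trans_eq (condExp_condExp_of_le hmm' hm')

lemma condExp_stopped_le_succ {T : ℕ} {W : ℕ → Ω → ℝ}
    (hWm : ∀ s ≤ T, StronglyMeasurable[ℱ s] (W s)) (hWi : ∀ s ≤ T, Integrable (W s) μ)
    {ρ : Ω → ℕ} (hρ : IsStoppingTime ℱ (fun ω => (ρ ω : WithTop ℕ))) {t n : ℕ} (htn : t ≤ n)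
    (hnT : n < T) (hsub : ∀ᵐ ω ∂μ, n < ρ ω → W n ω ≤ μ[W (n + 1) | ℱ n] ω) :
    μ[fun ω => W (min n (ρ ω)) ω | ℱ t] ≤ᵐ[μ] μ[fun ω => W (min (n + 1) (ρ ω)) ω | ℱ t] := by
  set A : Set Ω := {ω | n < ρ ω}
  have hA : MeasurableSet[ℱ n] A := by
    simpa only [ENat.some_eq_natCast, Nat.cast_lt] using hρ.measurableSet_gt n
  have hdecomp : (fun ω => W (min (n + 1) (ρ ω)) ω) =
      (fun ω => W (min n (ρ ω)) ω) + A.indicator (W (n + 1) - W n) := by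
    funext ω
    by_cases h : n < ρ ω
    · simp [A, h, min_eq_left h.le]
    · have h' : ρ ω ≤ n := not_lt.1 h
      simp [A, h, min_eq_right h', min_eq_right (h'.trans n.le_succ)]
  have hstopped : Integrable (fun ω => W (min n (ρ ω)) ω) μ :=
    integrable_eval_of_le (fun s hs => hWi s (hs.trans hnT.le))
      (measurable_const.min (measurable_of_isStoppingTime hρ)) fun ω => min_le_left _ _
  have hincr := condExp_indicator_sub_nonneg (ℱ.mono htn) (ℱ.le n) (hWm n hnT.le) (hWi n hnT.le)
    (hWi (n + 1) hnT) hA hsub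
  rw [hdecomp]
  filter_upwards [condExp_add hstopped
    ((hWi (n + 1) hnT).sub (hWi n hnT.le) |>.indicator (ℱ.le n _ hA)) (ℱ t), hincr] with ω h1 h2
  rw [h1, Pi.add_apply]
  exact le_add_of_nonneg_right h2

lemma le_condExp_eval_of_submartingale_before {T : ℕ} {W : ℕ → Ω → ℝ}
    (hWm : ∀ s ≤ T, StronglyMeasurable[ℱ s] (W s)) (hWi : ∀ s ≤ T, Integrable (W s) μ)
    {t : ℕ} (ht : t ≤ T) {ρ : Ω → ℕ} (hρ : IsStoppingTime ℱ (fun ω => (ρ ω : WithTop ℕ)))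
    (htρ : ∀ ω, t ≤ ρ ω) (hρT : ∀ ω, ρ ω ≤ T)
    (hsub : ∀ s, t ≤ s → s < T → ∀ᵐ ω ∂μ, s < ρ ω → W s ω ≤ μ[W (s + 1) | ℱ s] ω) :
    W t ≤ᵐ[μ] μ[fun ω => W (ρ ω) ω | ℱ t] := by
  have hstopped : ∀ n, t ≤ n → n ≤ T → W t ≤ᵐ[μ] μ[fun ω => W (min n (ρ ω)) ω | ℱ t] := by
    refine Nat.le_induction (fun _ => ?_) (fun n htn ih hn => ?_)
    · have hρt : (fun ω => W (min t (ρ ω)) ω) = W t := funext fun ω => by rw [min_eq_left (htρ ω)]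
      rw [hρt, condExp_of_stronglyMeasurable (ℱ.le t) (hWm t ht) (hWi t ht)]
    · exact (ih (by omega)).trans (condExp_stopped_le_succ hWm hWi hρ htn hn (hsub n htn hn))
  simpa only [min_eq_right (hρT _)] using hstopped T ht le_rfl

end

section

variable {Ω : Type*} {m0 : MeasurableSpace Ω} {μ : Measure Ω} {ℱ : Filtration ℕ m0} {T : ℕ}
  {X Y Z V : ℕ → Ω → ℝ}

lemma stronglyMeasurable_integrable_of_recursion (hXa : Adapted ℱ X) (hYa : Adapted ℱ Y)
    (hZa : Adapted ℱ Z) (hXi : ∀ s, Integrable (X s) μ) (hYi : ∀ s, Integrable (Y s) μ)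
    (hZi : ∀ s, Integrable (Z s) μ) (hVT : ∀ ω, V T ω = Z T ω)
    (hV : ∀ s < T, ∀ ω, V s ω =
      min (max (Y s ω) (Z s ω)) (max (min (X s ω) (Z s ω)) (μ[V (s + 1) | ℱ s] ω)))
    {s : ℕ} (hs : s ≤ T) : StronglyMeasurable[ℱ s] (V s) ∧ Integrable (V s) μ := by
  rcases hs.lt_or_eq with hs | rfl
  · have hX : Measurable[ℱ s] (X s) := hXa s
    have hY : Measurable[ℱ s] (Y s) := hYa s
    have hZ : Measurable[ℱ s] (Z s) := hZa s
    rw [funext (hV s hs)]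
    exact ⟨((hY.max hZ).min ((hX.min hZ).max stronglyMeasurable_condExp.measurable))
      |>.stronglyMeasurable, ((hYi s).sup (hZi s)).inf (((hXi s).inf (hZi s)).sup integrable_condExp)⟩
  · rw [show V s = Z s from funext hVT]
    exact ⟨(hZa s).stronglyMeasurable, hZi s⟩

def MaximizerStops (t : ℕ) (σ : Ω → ℕ) (X Z V : ℕ → Ω → ℝ) (s : ℕ) (ω : Ω) : Prop :=
  t ≤ s ∧ ((s < σ ω ∧ V s ω ≤ X s ω) ∨ (σ ω = s ∧ V s ω ≤ Z s ω) ∨ σ ω < s)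

lemma measurableSet_maximizerStops {t s : ℕ} {σ : Ω → ℕ}
    (hσ : IsStoppingTime ℱ (fun ω => (σ ω : WithTop ℕ))) (hX : Measurable[ℱ s] (X s))
    (hZ : Measurable[ℱ s] (Z s)) (hV : Measurable[ℱ s] (V s)) :
    MeasurableSet[ℱ s] {ω | MaximizerStops t σ X Z V s ω} := by
  have hgt : MeasurableSet[ℱ s] {ω | s < σ ω} := by
    simpa only [ENat.some_eq_natCast, Nat.cast_lt] using hσ.measurableSet_gt s
  have heq : MeasurableSet[ℱ s] {ω | σ ω = s} := by
    simpa only [ENat.some_eq_natCast, Nat.cast_inj] using hσ.measurableSet_eq s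
  have hlt : MeasurableSet[ℱ s] {ω | σ ω < s} := by
    simpa only [ENat.some_eq_natCast, Nat.cast_lt] using hσ.measurableSet_lt s
  exact (MeasurableSet.const _).inter ((hgt.inter (measurableSet_le hV hX)).union
    ((heq.inter (measurableSet_le hV hZ)).union hlt))

lemma le_payoffD_of_maximizerStops {t : ℕ} {τ σ : Ω → ℕ} {ω : Ω}
    (hVU : ∀ s < T, V s ω ≤ max (Y s ω) (Z s ω)) (hσt : t ≤ σ ω) (hτT : τ ω ≤ T)
    (hstop : MaximizerStops t σ X Z V (τ ω) ω)
    (hfirst : ∀ s < τ ω, ¬ MaximizerStops t σ X Z V s ω) :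
    V (min (τ ω) (σ ω)) ω ≤ payoffD X Y Z τ σ ω := by
  rcases lt_trichotomy (τ ω) (σ ω) with h | h | h
  · obtain ⟨-, ⟨-, hVX⟩ | ⟨h', -⟩ | h'⟩ := hstop
    · simpa [payoffD, h, min_eq_left h.le] using hVX
    all_goals omega
  · obtain ⟨-, ⟨h', -⟩ | ⟨-, hVZ⟩ | h'⟩ := hstop
    · omega
    · simpa [payoffD, h] using hVZ
    · omega
  · have hVZ : ¬ V (σ ω) ω ≤ Z (σ ω) ω := fun hVZ =>
      hfirst (σ ω) h ⟨hσt, Or.inr (Or.inl ⟨rfl, hVZ⟩)⟩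
    have hVY : V (σ ω) ω ≤ Y (σ ω) ω :=
      (le_max_iff.1 (hVU _ (h.trans_le hτT))).resolve_right hVZ
    simpa [payoffD, h, h.not_gt, min_eq_right h.le] using hVY

variable [IsFiniteMeasure μ]

lemma exists_le_condExp_payoffD (hXa : Adapted ℱ X) (hZa : Adapted ℱ Z)
    (hXi : ∀ s, Integrable (X s) μ) (hYi : ∀ s, Integrable (Y s) μ)
    (hZi : ∀ s, Integrable (Z s) μ)
    (hVm : ∀ s ≤ T, StronglyMeasurable[ℱ s] (V s)) (hVi : ∀ s ≤ T, Integrable (V s) μ)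
    (hVU : ∀ s < T, ∀ ω, V s ω ≤ max (Y s ω) (Z s ω))
    (hVE : ∀ s < T, ∀ᵐ ω ∂μ, V s ω ≤ max (min (X s ω) (Z s ω)) (μ[V (s + 1) | ℱ s] ω))
    (hVT : ∀ ω, V T ω ≤ Z T ω) {t : ℕ} (ht : t ≤ T) (σ : StoppingTimeIcc ℱ t T) :
    ∃ τ : StoppingTimeIcc ℱ t T, V t ≤ᵐ[μ] μ[payoffD X Y Z τ.1 σ.1 | ℱ t] := by
  obtain ⟨σ, hσ, hσtT⟩ := σ
  have hstopT : ∀ ω, MaximizerStops t σ X Z V T ω := fun ω => ⟨ht, by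
    rcases (hσtT ω).2.lt_or_eq with h | h
    · exact Or.inr (Or.inr h)
    · exact Or.inr (Or.inl ⟨h, hVT ω⟩)⟩
  obtain ⟨τ, hτ, hτT, hstop, hfirst⟩ := exists_isStoppingTime_first
    (fun s hs => measurableSet_maximizerStops hσ (hXa s) (hZa s) (hVm s hs).measurable) hstopT
  have hsub : ∀ s, t ≤ s → s < T →
      ∀ᵐ ω ∂μ, s < min (τ ω) (σ ω) → V s ω ≤ μ[V (s + 1) | ℱ s] ω := by
    intro s hts hsT
    filter_upwards [hVE s hsT] with ω hω hs
    have hVX : ¬ V s ω ≤ X s ω := fun h =>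
      hfirst ω s (lt_min_iff.1 hs).1 ⟨hts, Or.inl ⟨(lt_min_iff.1 hs).2, h⟩⟩
    exact (le_max_iff.1 hω).resolve_left fun h => hVX (h.trans (min_le_left _ _))
  have hτm := measurable_of_isStoppingTime hτ
  have hσm := measurable_of_isStoppingTime hσ
  have hρT ω : min (τ ω) (σ ω) ≤ T := (min_le_left _ _).trans (hτT ω)
  refine ⟨⟨τ, hτ, fun ω => ⟨(hstop ω).1, hτT ω⟩⟩, ?_⟩
  calc V t ≤ᵐ[μ] μ[fun ω => V (min (τ ω) (σ ω)) ω | ℱ t] :=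
        le_condExp_eval_of_submartingale_before hVm hVi ht (isStoppingTime_min hτ hσ)
          (fun ω => le_min (hstop ω).1 (hσtT ω).1) hρT hsub
    _ ≤ᵐ[μ] μ[payoffD X Y Z τ σ | ℱ t] :=
        condExp_mono (integrable_eval_of_le hVi (hτm.min hσm) hρT)
          (integrable_payoffD hXi hYi hZi hτm hσm hτT fun ω => (hσtT ω).2)
          (ae_of_all _ fun ω => le_payoffD_of_maximizerStops (fun s hs => hVU s hs ω)
            (hσtT ω).1 (hτT ω) (hstop ω) (hfirst ω))

lemma exists_condExp_payoffD_le (hYa : Adapted ℱ Y) (hZa : Adapted ℱ Z)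
    (hXi : ∀ s, Integrable (X s) μ) (hYi : ∀ s, Integrable (Y s) μ)
    (hZi : ∀ s, Integrable (Z s) μ)
    (hVm : ∀ s ≤ T, StronglyMeasurable[ℱ s] (V s)) (hVi : ∀ s ≤ T, Integrable (V s) μ)
    (hLV : ∀ s < T, ∀ ω, min (X s ω) (Z s ω) ≤ V s ω)
    (hEV : ∀ s < T, ∀ᵐ ω ∂μ, min (max (Y s ω) (Z s ω)) (μ[V (s + 1) | ℱ s] ω) ≤ V s ω)
    (hVT : ∀ ω, Z T ω ≤ V T ω) {t : ℕ} (ht : t ≤ T) (τ : StoppingTimeIcc ℱ t T) :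
    ∃ σ : StoppingTimeIcc ℱ t T, μ[payoffD X Y Z τ.1 σ.1 | ℱ t] ≤ᵐ[μ] V t := by
  have hVU : ∀ s < T, ∀ ω, (-V) s ω ≤ max ((-X) s ω) ((-Z) s ω) := fun s hs ω => by
    simpa [max_neg_neg] using hLV s hs ω
  have hVE : ∀ s < T, ∀ᵐ ω ∂μ,
      (-V) s ω ≤ max (min ((-Y) s ω) ((-Z) s ω)) (μ[(-V) (s + 1) | ℱ s] ω) := fun s hs => by
    filter_upwards [hEV s hs, condExp_neg (V (s + 1)) (ℱ s)] with ω hω hneg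
    have hneg' : μ[(-V) (s + 1) | ℱ s] ω = -μ[V (s + 1) | ℱ s] ω := hneg
    rw [hneg']
    simp only [Pi.neg_apply, min_neg_neg, max_neg_neg, neg_le_neg_iff]
    exact hω
  obtain ⟨σ, hσ⟩ := exists_le_condExp_payoffD (X := -Y) (Y := -X) (Z := -Z) (V := -V)
    hYa.neg hZa.neg (fun s => (hYi s).neg) (fun s => (hXi s).neg) (fun s => (hZi s).neg)
    (fun s hs => (hVm s hs).neg) (fun s hs => (hVi s hs).neg) hVU hVE
    (fun ω => neg_le_neg (hVT ω)) ht τ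
  refine ⟨σ, ?_⟩
  rw [payoffD_neg_swap] at hσ
  filter_upwards [hσ, condExp_neg (payoffD X Y Z τ.1 σ.1) (ℱ t)] with ω hω hneg
  simpa [hneg] using hω

end

theorem stmt8_general {Ω : Type*} {m0 : MeasurableSpace Ω} (μ : Measure Ω) [IsProbabilityMeasure μ]
    (ℱ : Filtration ℕ m0) (T : ℕ)
    (X Y Z V : ℕ → Ω → ℝ)
    (hXa : Adapted ℱ X) (hYa : Adapted ℱ Y) (hZa : Adapted ℱ Z)
    (hXi : ∀ s, Integrable (X s) μ) (hYi : ∀ s, Integrable (Y s) μ)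
    (hZi : ∀ s, Integrable (Z s) μ)
    (hVT : ∀ ω, V T ω = Z T ω)
    (hV : ∀ t, t < T → ∀ ω, V t ω =
      min (max (Y t ω) (Z t ω))
        (max (min (X t ω) (Z t ω)) ((μ[V (t + 1) | ℱ t]) ω))) :
    ∀ t, t ≤ T →
      -- the minimax dominates `V_t`:
      (∀ (S : {σ : Ω → ℕ // IsStoppingTime ℱ (fun ω => (σ ω : WithTop ℕ)) ∧ ∀ ω, σ ω ∈ Set.Icc t T} → Ω → ℝ)
          (m : Ω → ℝ),
        (∀ σ, IsEssSupFam μ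
          (fun τ : {τ : Ω → ℕ // IsStoppingTime ℱ (fun ω => (τ ω : WithTop ℕ)) ∧ ∀ ω, τ ω ∈ Set.Icc t T} =>
            μ[payoffD X Y Z τ.1 σ.1 | ℱ t]) (S σ)) →
        IsEssInfFam μ S m → V t ≤ᵐ[μ] m) ∧
      -- `V_t` dominates the maximin:
      (∀ (I : {τ : Ω → ℕ // IsStoppingTime ℱ (fun ω => (τ ω : WithTop ℕ)) ∧ ∀ ω, τ ω ∈ Set.Icc t T} → Ω → ℝ)
          (m : Ω → ℝ),
        (∀ τ, IsEssInfFam μ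
          (fun σ : {σ : Ω → ℕ // IsStoppingTime ℱ (fun ω => (σ ω : WithTop ℕ)) ∧ ∀ ω, σ ω ∈ Set.Icc t T} =>
            μ[payoffD X Y Z τ.1 σ.1 | ℱ t]) (I τ)) →
        IsEssSupFam μ I m → m ≤ᵐ[μ] V t) ∧
      -- if the general game has a value, it equals `V_t`:
      (∀ (S I : {ρ : Ω → ℕ // IsStoppingTime ℱ (fun ω => (ρ ω : WithTop ℕ)) ∧ ∀ ω, ρ ω ∈ Set.Icc t T} → Ω → ℝ)
          (v : Ω → ℝ),
        (∀ σ, IsEssSupFam μ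
          (fun τ : {τ : Ω → ℕ // IsStoppingTime ℱ (fun ω => (τ ω : WithTop ℕ)) ∧ ∀ ω, τ ω ∈ Set.Icc t T} =>
            μ[payoffD X Y Z τ.1 σ.1 | ℱ t]) (S σ)) →
        (∀ τ, IsEssInfFam μ
          (fun σ : {σ : Ω → ℕ // IsStoppingTime ℱ (fun ω => (σ ω : WithTop ℕ)) ∧ ∀ ω, σ ω ∈ Set.Icc t T} =>
            μ[payoffD X Y Z τ.1 σ.1 | ℱ t]) (I τ)) →
        IsEssInfFam μ S v → IsEssSupFam μ I v → v =ᵐ[μ] V t) := by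
  intro t ht
  have hVmi s (hs : s ≤ T) :=
    stronglyMeasurable_integrable_of_recursion (μ := μ) hXa hYa hZa hXi hYi hZi hVT hV hs
  have hVm s hs := (hVmi s hs).1
  have hVi s hs := (hVmi s hs).2
  have hlower : ∀ σ : StoppingTimeIcc ℱ t T, ∃ τ : StoppingTimeIcc ℱ t T,
      V t ≤ᵐ[μ] μ[payoffD X Y Z τ.1 σ.1 | ℱ t] :=
    exists_le_condExp_payoffD hXa hZa hXi hYi hZi hVm hVi
      (fun s hs ω => (hV s hs ω).trans_le (min_le_left _ _))
      (fun s hs => ae_of_all _ fun ω => (hV s hs ω).trans_le (min_le_right _ _))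
      (fun ω => (hVT ω).le) ht
  have hupper : ∀ τ : StoppingTimeIcc ℱ t T, ∃ σ : StoppingTimeIcc ℱ t T,
      μ[payoffD X Y Z τ.1 σ.1 | ℱ t] ≤ᵐ[μ] V t :=
    exists_condExp_payoffD_le hYa hZa hXi hYi hZi hVm hVi
      (fun s hs ω => (hV s hs ω).symm ▸
        le_min ((min_le_right _ _).trans (le_max_right _ _)) (le_max_left _ _))
      (fun s hs => ae_of_all _ fun ω => (hV s hs ω).symm ▸ min_le_min_left _ (le_max_right _ _))
      (fun ω => (hVT ω).ge) ht
  refine ⟨fun S m hS hm => le_minimax_of_forall_exists hS hm hlower,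
    fun I m hI hm => maximin_le_of_forall_exists hI hm hupper, fun S I v hS hI hvS hvI => ?_⟩
  exact (maximin_le_of_forall_exists hI hvI hupper).antisymm
    (le_minimax_of_forall_exists hS hvS hlower)

/-- Let `V` be the backward-induction value process of the standard Dynkin game
`SDG(L,U,Z)` with `L = X ∧ Z`, `U = Y ∨ Z`.  For each `t`, `V_t` lies between the
minimax and the maximin of the general game `GDG_t(X,Y,Z)`; consequently, if the
general game has a value, that value equals `V_t`. -/
theorem stmt8 {Ω : Type*} {m0 : MeasurableSpace Ω} (μ : Measure Ω) [IsProbabilityMeasure μ]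
    (ℱ : Filtration ℕ m0) (T : ℕ)
    (X Y Z V : ℕ → Ω → ℝ)
    (hXa : Adapted ℱ X) (hYa : Adapted ℱ Y) (hZa : Adapted ℱ Z)
    (hXi : ∀ s, Integrable (X s) μ) (hYi : ∀ s, Integrable (Y s) μ)
    (hZi : ∀ s, Integrable (Z s) μ)
    (htermX : ∀ ω, X T ω = Z T ω) (htermY : ∀ ω, Y T ω = Z T ω)
    (hVT : ∀ ω, V T ω = Z T ω)
    (hV : ∀ t, t < T → ∀ ω, V t ω =
      min (max (Y t ω) (Z t ω))
        (max (min (X t ω) (Z t ω)) ((μ[V (t + 1) | ℱ t]) ω))) :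
    ∀ t, t ≤ T →
      -- the minimax dominates `V_t`:
      (∀ (S : {σ : Ω → ℕ // IsStoppingTime ℱ (fun ω => (σ ω : WithTop ℕ)) ∧ ∀ ω, σ ω ∈ Set.Icc t T} → Ω → ℝ)
          (m : Ω → ℝ),
        (∀ σ, IsEssSupFam μ
          (fun τ : {τ : Ω → ℕ // IsStoppingTime ℱ (fun ω => (τ ω : WithTop ℕ)) ∧ ∀ ω, τ ω ∈ Set.Icc t T} =>
            μ[payoffD X Y Z τ.1 σ.1 | ℱ t]) (S σ)) →
        IsEssInfFam μ S m → V t ≤ᵐ[μ] m) ∧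
      -- `V_t` dominates the maximin:
      (∀ (I : {τ : Ω → ℕ // IsStoppingTime ℱ (fun ω => (τ ω : WithTop ℕ)) ∧ ∀ ω, τ ω ∈ Set.Icc t T} → Ω → ℝ)
          (m : Ω → ℝ),
        (∀ τ, IsEssInfFam μ
          (fun σ : {σ : Ω → ℕ // IsStoppingTime ℱ (fun ω => (σ ω : WithTop ℕ)) ∧ ∀ ω, σ ω ∈ Set.Icc t T} =>
            μ[payoffD X Y Z τ.1 σ.1 | ℱ t]) (I τ)) →
        IsEssSupFam μ I m → m ≤ᵐ[μ] V t) ∧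
      -- if the general game has a value, it equals `V_t`:
      (∀ (S I : {ρ : Ω → ℕ // IsStoppingTime ℱ (fun ω => (ρ ω : WithTop ℕ)) ∧ ∀ ω, ρ ω ∈ Set.Icc t T} → Ω → ℝ)
          (v : Ω → ℝ),
        (∀ σ, IsEssSupFam μ
          (fun τ : {τ : Ω → ℕ // IsStoppingTime ℱ (fun ω => (τ ω : WithTop ℕ)) ∧ ∀ ω, τ ω ∈ Set.Icc t T} =>
            μ[payoffD X Y Z τ.1 σ.1 | ℱ t]) (S σ)) →
        (∀ τ, IsEssInfFam μ
          (fun σ : {σ : Ω → ℕ // IsStoppingTime ℱ (fun ω => (σ ω : WithTop ℕ)) ∧ ∀ ω, σ ω ∈ Set.Icc t T} =>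
            μ[payoffD X Y Z τ.1 σ.1 | ℱ t]) (I τ)) →
        IsEssInfFam μ S v → IsEssSupFam μ I v → v =ᵐ[μ] V t) :=
  stmt8_general μ ℱ T X Y Z V hXa hYa hZa hXi hYi hZi hVT hV
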